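/- arXiv:2202.07542 — 2 statements merged into one kernel-verified Lean document; each statement's English description precedes it below -/
import Mathlib

section
/- Let σ > 0 and L ∈ ℝ. Let I : ℝ → (0,∞) → ℝ be a positive implied-volatility function (in log-strike k and time-to-maturity τ), and let k₋, k₊ : (0,∞) → ℝ satisfy the zero-vanna conditions k₋(τ) = −(1/2)·I(k₋(τ),τ)²·τ and k₊(τ) = (1/2)·I(k₊(τ),τ)²·τ for all τ > 0. Assume there exist constants 0 < a ≤ b, τ₀ > 0, C ≥ 0 and a function S : (0,∞) → ℝ such that: (i) a ≤ I(k,τ) ≤ b for all k ∈ ℝ and τ ∈ (0,τ₀]; (ii) |I(k,τ) − I(0,τ) − k·S(τ)| ≤ C·k² for all k ∈ ℝ and τ ∈ (0,τ₀] (the implied volatility admits a first-order Taylor expansion in strike with uniformly quadratic remainder); (iii) I(0,τ) → σ as τ → 0⁺; (iv) S(τ) → L as τ → 0⁺. Then (I(k₊(τ),τ) − I(k₋(τ),τ)) / (σ²·τ) → L as τ → 0⁺. -/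
open Filter Topology

/-- Proposition 2 of the paper (analytic form). If the implied volatility
`I k τ` is positive, uniformly bounded between `a` and `b` near maturity,
admits a first-order Taylor expansion in log-strike with uniformly quadratic
remainder, the ATM implied volatility tends to the spot volatility `σ` and
the ATM skew `S` tends to `L` as `τ → 0⁺`, and `km, kp` are the zero-vanna
log-strikes, then `(I₊ - I₋) / (σ² τ) → L` as `τ → 0⁺`. -/
theorem zero_vanna_skew_limit
    (σ L : ℝ) (hσ : 0 < σ)
    (I : ℝ → ℝ → ℝ) (km kp : ℝ → ℝ)
    (hIpos : ∀ k : ℝ, ∀ τ : ℝ, 0 < τ → 0 < I k τ)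
    (hkm : ∀ τ : ℝ, 0 < τ → km τ = -(1/2) * (I (km τ) τ)^2 * τ)
    (hkp : ∀ τ : ℝ, 0 < τ → kp τ = (1/2) * (I (kp τ) τ)^2 * τ)
    (a b τ₀ C : ℝ) (ha : 0 < a) (hab : a ≤ b) (hτ₀ : 0 < τ₀) (hC : 0 ≤ C)
    (S : ℝ → ℝ)
    (hlb : ∀ k : ℝ, ∀ τ : ℝ, 0 < τ → τ ≤ τ₀ → a ≤ I k τ)
    (hub : ∀ k : ℝ, ∀ τ : ℝ, 0 < τ → τ ≤ τ₀ → I k τ ≤ b)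
    (hTaylor : ∀ k : ℝ, ∀ τ : ℝ, 0 < τ → τ ≤ τ₀ →
      |I k τ - I 0 τ - k * S τ| ≤ C * k^2)
    (hATM : Tendsto (fun τ => I 0 τ) (𝓝[>] (0:ℝ)) (𝓝 σ))
    (hS : Tendsto S (𝓝[>] (0:ℝ)) (𝓝 L)) :
    Tendsto (fun τ => (I (kp τ) τ - I (km τ) τ) / (σ^2 * τ))
      (𝓝[>] (0:ℝ)) (𝓝 L) := by
  have hσ' : (σ:ℝ) ≠ 0 := ne_of_gt hσ
  have hb : 0 < b := lt_of_lt_of_le ha hab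
  have hev : Set.Ioc (0:ℝ) τ₀ ∈ 𝓝[>] (0:ℝ) := Ioc_mem_nhdsGT_of_mem ⟨le_refl 0, hτ₀⟩
  -- bounds on the zero-vanna strikes
  have hkmb : ∀ τ : ℝ, 0 < τ → τ ≤ τ₀ → |km τ| ≤ b^2 * τ / 2 := by
    intro τ hτ hττ
    have h1 : 0 < I (km τ) τ := hIpos _ _ hτ
    have h2 : I (km τ) τ ≤ b := hub _ _ hτ hττ
    have hsq : (I (km τ) τ)^2 ≤ b^2 := by nlinarith
    rw [hkm τ hτ, abs_of_nonpos (by nlinarith)]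
    nlinarith
  have hkpb : ∀ τ : ℝ, 0 < τ → τ ≤ τ₀ → |kp τ| ≤ b^2 * τ / 2 := by
    intro τ hτ hττ
    have h1 : 0 < I (kp τ) τ := hIpos _ _ hτ
    have h2 : I (kp τ) τ ≤ b := hub _ _ hτ hττ
    have hsq : (I (kp τ) τ)^2 ≤ b^2 := by nlinarith
    rw [hkp τ hτ, abs_of_nonneg (by nlinarith)]
    nlinarith
  -- S is eventually bounded by |L| + 1
  have hSb : ∀ᶠ τ in 𝓝[>] (0:ℝ), |S τ| ≤ |L| + 1 := by
    have := hS.abs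
    have h1 : ∀ᶠ τ in 𝓝[>] (0:ℝ), |S τ| < |L| + 1 :=
      this.eventually_lt_const (by linarith [abs_nonneg L])
    exact h1.mono fun τ h => le_of_lt h
  -- I at the zero-vanna strikes tends to σ
  have hdiff : ∀ (q : ℝ → ℝ), (∀ τ : ℝ, 0 < τ → τ ≤ τ₀ → |q τ| ≤ b^2 * τ / 2) →
      Tendsto (fun τ => I (q τ) τ) (𝓝[>] (0:ℝ)) (𝓝 σ) := by
    intro q hq
    have h0 : Tendsto (fun τ => I (q τ) τ - I 0 τ) (𝓝[>] (0:ℝ)) (𝓝 0) := by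
      refine squeeze_zero_norm'
        (a := fun τ => (|L| + 1) * (b^2 * τ / 2) + C * (b^2 * τ / 2)^2) ?_ ?_
      · filter_upwards [hev, hSb] with τ hτ hSτ
        have hτ1 : 0 < τ := hτ.1
        have hτ2 : τ ≤ τ₀ := hτ.2
        have hT := hTaylor (q τ) τ hτ1 hτ2
        have hqb := hq τ hτ1 hτ2
        have h1 : |I (q τ) τ - I 0 τ| ≤ |I (q τ) τ - I 0 τ - q τ * S τ| + |q τ * S τ| := by
          calc |I (q τ) τ - I 0 τ| = |(I (q τ) τ - I 0 τ - q τ * S τ) + q τ * S τ| := by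
                ring_nf
            _ ≤ _ := abs_add_le _ _
        have h2 : |q τ * S τ| ≤ (b^2 * τ / 2) * (|L| + 1) := by
          rw [abs_mul]
          have hq0 : 0 ≤ |q τ| := abs_nonneg _
          have hS0 : 0 ≤ |S τ| := abs_nonneg _
          nlinarith
        have h3 : C * (q τ)^2 ≤ C * (b^2 * τ / 2)^2 := by
          have := sq_abs (q τ)
          have hqb2 : (q τ)^2 ≤ (b^2 * τ / 2)^2 := by
            rw [← sq_abs (q τ)]
            exact pow_le_pow_left₀ (abs_nonneg _) hqb 2
          nlinarith
        simp only [Real.norm_eq_abs]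
        calc |I (q τ) τ - I 0 τ| ≤ |I (q τ) τ - I 0 τ - q τ * S τ| + |q τ * S τ| := h1
          _ ≤ C * (q τ)^2 + (b^2 * τ / 2) * (|L| + 1) := by linarith
          _ ≤ (|L| + 1) * (b^2 * τ / 2) + C * (b^2 * τ / 2)^2 := by nlinarith
      · have hc : Continuous (fun τ : ℝ => (|L| + 1) * (b^2 * τ / 2) + C * (b^2 * τ / 2)^2) := by
          fun_prop
        exact (hc.tendsto' 0 0 (by ring)).mono_left nhdsWithin_le_nhds
    have := h0.add hATM
    simpa using this
  have hmσ : Tendsto (fun τ => I (km τ) τ) (𝓝[>] (0:ℝ)) (𝓝 σ) := hdiff km hkmb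
  have hpσ : Tendsto (fun τ => I (kp τ) τ) (𝓝[>] (0:ℝ)) (𝓝 σ) := hdiff kp hkpb
  -- the main term
  set g : ℝ → ℝ := fun τ => S τ * ((I (kp τ) τ)^2 + (I (km τ) τ)^2) / (2 * σ^2) with hg
  have hgL : Tendsto g (𝓝[>] (0:ℝ)) (𝓝 L) := by
    have h1 : Tendsto (fun τ => S τ * ((I (kp τ) τ)^2 + (I (km τ) τ)^2))
        (𝓝[>] (0:ℝ)) (𝓝 (L * (σ^2 + σ^2))) :=
      hS.mul ((hpσ.pow 2).add (hmσ.pow 2))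
    have h2 := h1.div_const (2 * σ^2)
    have : L * (σ^2 + σ^2) / (2 * σ^2) = L := by
      rw [div_eq_iff (by positivity : (0:ℝ) < 2 * σ^2).ne']; ring
    rw [this] at h2
    exact h2
  -- the error term tends to zero
  have herr : Tendsto (fun τ => (I (kp τ) τ - I (km τ) τ) / (σ^2 * τ) - g τ)
      (𝓝[>] (0:ℝ)) (𝓝 0) := by
    refine squeeze_zero_norm' (a := fun τ => C * b^4 * τ / (2 * σ^2)) ?_ ?_
    · filter_upwards [hev] with τ hτ
      have hτ1 : 0 < τ := hτ.1
      have hτ2 : τ ≤ τ₀ := hτ.2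
      set P := I (kp τ) τ with hP
      set M := I (km τ) τ with hM
      have hkmτ := hkm τ hτ1
      have hkpτ := hkp τ hτ1
      have heq : (P - M) / (σ^2 * τ) - g τ
          = ((P - I 0 τ - kp τ * S τ) - (M - I 0 τ - km τ * S τ)) / (σ^2 * τ) := by
        rw [hg]
        rw [hkmτ, hkpτ]
        field_simp
        ring
      rw [Real.norm_eq_abs, heq, abs_div]
      have hpos : 0 < σ^2 * τ := by positivity
      rw [abs_of_pos hpos, div_le_div_iff₀ hpos (by positivity)]
      have hT1 := hTaylor (kp τ) τ hτ1 hτ2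
      have hT2 := hTaylor (km τ) τ hτ1 hτ2
      have habs : |(P - I 0 τ - kp τ * S τ) - (M - I 0 τ - km τ * S τ)|
          ≤ C * (kp τ)^2 + C * (km τ)^2 := by
        calc _ ≤ |P - I 0 τ - kp τ * S τ| + |M - I 0 τ - km τ * S τ| := abs_sub _ _
          _ ≤ C * (kp τ)^2 + C * (km τ)^2 := add_le_add hT1 hT2
      have hkp2 : (kp τ)^2 ≤ (b^2 * τ / 2)^2 := by
        rw [← sq_abs (kp τ)]
        exact pow_le_pow_left₀ (abs_nonneg _) (hkpb τ hτ1 hτ2) 2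
      have hkm2 : (km τ)^2 ≤ (b^2 * τ / 2)^2 := by
        rw [← sq_abs (km τ)]
        exact pow_le_pow_left₀ (abs_nonneg _) (hkmb τ hτ1 hτ2) 2
      have key : C * (kp τ)^2 + C * (km τ)^2 ≤ C * b^4 * τ^2 / 2 := by nlinarith
      calc |(P - I 0 τ - kp τ * S τ) - (M - I 0 τ - km τ * S τ)| * (2 * σ^2)
          ≤ (C * b^4 * τ^2 / 2) * (2 * σ^2) := by
            apply mul_le_mul_of_nonneg_right (le_trans habs key) (by positivity)
        _ = C * b^4 * τ * (σ^2 * τ) := by ring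
    · have hc : Continuous (fun τ : ℝ => C * b^4 * τ / (2 * σ^2)) := by fun_prop
      exact (hc.tendsto' 0 0 (by ring)).mono_left nhdsWithin_le_nhds
  have := herr.add hgL
  simpa using this
end

section
/- Let 0 < a ≤ b, τ₀ > 0 and C ≥ 0. Let I : ℝ → (0,∞) → ℝ with a ≤ I(k,τ) ≤ b for all k ∈ ℝ and τ ∈ (0,τ₀], and let S : (0,∞) → ℝ be such that |I(k,τ) − I(0,τ) − k·S(τ)| ≤ C·k² for all k ∈ ℝ and τ ∈ (0,τ₀]. Let k₋, k₊ : (0,∞) → ℝ satisfy k₋(τ) = −(1/2)·I(k₋(τ),τ)²·τ and k₊(τ) = (1/2)·I(k₊(τ),τ)²·τ. Then for all τ ∈ (0,τ₀], |I(k₊(τ),τ) − I(k₋(τ),τ) − (1/2)·(I(k₊(τ),τ)² + I(k₋(τ),τ)²)·τ·S(τ)| ≤ (1/2)·C·b⁴·τ². -/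
open Set

/-- Key quantitative step in the proof of Proposition 2: with a uniformly
bounded implied volatility admitting a first-order Taylor expansion in
log-strike with uniformly quadratic remainder, the difference of the dual
and zero-vanna implied volatilities equals `(1/2)(I₊² + I₋²) τ S(τ)` up to
an error of size at most `(1/2) C b⁴ τ²`. -/
theorem zero_vanna_quantitative
    (a b τ₀ C : ℝ) (ha : 0 < a) (hab : a ≤ b) (hτ₀ : 0 < τ₀) (hC : 0 ≤ C)
    (I : ℝ → ℝ → ℝ)
    (hlb : ∀ k : ℝ, ∀ τ : ℝ, 0 < τ → τ ≤ τ₀ → a ≤ I k τ)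
    (hub : ∀ k : ℝ, ∀ τ : ℝ, 0 < τ → τ ≤ τ₀ → I k τ ≤ b)
    (S : ℝ → ℝ)
    (hTaylor : ∀ k : ℝ, ∀ τ : ℝ, 0 < τ → τ ≤ τ₀ →
      |I k τ - I 0 τ - k * S τ| ≤ C * k^2)
    (km kp : ℝ → ℝ)
    (hkm : ∀ τ : ℝ, 0 < τ → km τ = -(1/2) * (I (km τ) τ)^2 * τ)
    (hkp : ∀ τ : ℝ, 0 < τ → kp τ = (1/2) * (I (kp τ) τ)^2 * τ) :
    ∀ τ : ℝ, 0 < τ → τ ≤ τ₀ →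
      |I (kp τ) τ - I (km τ) τ -
        (1/2) * ((I (kp τ) τ)^2 + (I (km τ) τ)^2) * τ * S τ| ≤
      (1/2) * C * b^4 * τ^2 := by
  intro τ hτ hτ₀'
  set Ip := I (kp τ) τ with hIp
  set Im := I (km τ) τ with hIm
  have h1 := hTaylor (kp τ) τ hτ hτ₀'
  have h2 := hTaylor (km τ) τ hτ hτ₀'
  have hkpτ := hkp τ hτ
  have hkmτ := hkm τ hτ
  have hIpb : Ip ≤ b := hub _ _ hτ hτ₀'
  have hImb : Im ≤ b := hub _ _ hτ hτ₀'
  have hIpa : 0 ≤ Ip := ha.le.trans (hlb _ _ hτ hτ₀')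
  have hIma : 0 ≤ Im := ha.le.trans (hlb _ _ hτ hτ₀')
  have hIp4 : Ip ^ 4 ≤ b ^ 4 := pow_le_pow_left₀ hIpa hIpb 4
  have hIm4 : Im ^ 4 ≤ b ^ 4 := pow_le_pow_left₀ hIma hImb 4
  have key : Ip - Im - (1/2) * (Ip^2 + Im^2) * τ * S τ
      = (Ip - I 0 τ - kp τ * S τ) - (Im - I 0 τ - km τ * S τ) := by
    rw [hkpτ, hkmτ]; ring
  rw [key]
  calc |(Ip - I 0 τ - kp τ * S τ) - (Im - I 0 τ - km τ * S τ)|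
      ≤ |Ip - I 0 τ - kp τ * S τ| + |Im - I 0 τ - km τ * S τ| := abs_sub _ _
    _ ≤ C * (kp τ)^2 + C * (km τ)^2 := add_le_add h1 h2
    _ = C * ((1/4) * Ip^4 * τ^2) + C * ((1/4) * Im^4 * τ^2) := by
        rw [hkpτ, hkmτ]; ring
    _ ≤ C * ((1/4) * b^4 * τ^2) + C * ((1/4) * b^4 * τ^2) := by
        gcongr
    _ = (1/2) * C * b^4 * τ^2 := by ring
end
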